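/- arXiv:2106.03339 — 5 statements merged into one kernel-verified Lean document; each statement's English description precedes it below -/
import Mathlib

section
/- Let s₁, t₁, s₂₁, s₂₂, t₂ ∈ ℝ satisfy s₁² + t₁² = 1, t₁ > 0, s₂₁² + s₂₂² + t₂² = 1, t₂ > 0, and let Ã be either of the 3×3 real matrices Ã₁ = [[1, s₁, s₂₁], [0, t₁, s₂₂], [0, 0, t₂]] or Ã₂ = [[1, −s₁, s₂₁], [0, t₁, s₂₂], [0, 0, t₂]]. Then ‖Ã‖₂ ≤ 2; moreover, for any α₁, α₂, α₃ > 0, letting T ⊂ ℝ³ be the tetrahedron Ã·diag(α₁,α₂,α₃)(T̂) (where T̂ is the reference tetrahedron with vertices (0,0,0), (1,0,0), (0,1,0), (0,0,1) for Ã₁, respectively (0,0,0), (1,0,0), (1,1,0), (0,0,1) for Ã₂), with volume |T|, one has ‖Ã‖₂·‖Ã⁻¹‖₂ ≤ (2/3)·α₁α₂α₃/|T|, and |det(Ã·diag(α₁,α₂,α₃))| = 6|T|. -/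
open MeasureTheory ENNReal

noncomputable section

abbrev Euc (d : ℕ) : Type := EuclideanSpace ℝ (Fin d)

/-- The spectral (ℓ²-operator) norm of a square real matrix. -/
def specNorm {n : ℕ} (A : Matrix (Fin n) (Fin n) ℝ) : ℝ :=
  ‖LinearMap.toContinuousLinearMap (Matrix.toEuclideanLin A)‖

def vec3 (a b c : ℝ) : Euc 3 := (WithLp.equiv 2 (Fin 3 → ℝ)).symm ![a, b, c]

/-!
The columns of `Ã` are unit vectors, so its Frobenius norm is `√3 ≤ 2`; the adjugate of `Ã` has
Frobenius norm at most `2` as well, and `det Ã = t₁ t₂`, whence `‖Ã‖₂ ‖Ã⁻¹‖₂ ≤ 4 / (t₁ t₂)`.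
On the other side, `T` is the image of the corner simplex `{x ≥ 0, ∑ xᵢ ≤ 1}` (volume `1/3!`,
by Fubini and induction on the dimension) under a linear map of determinant `α₁α₂α₃ t₁ t₂`,
so `|T| = α₁α₂α₃ t₁ t₂ / 6`.
-/

open Set Nat Matrix

def cornerSimplex (n : ℕ) (c : ℝ) : Set (Fin n → ℝ) :=
  {x | (∀ i, 0 ≤ x i) ∧ ∑ i, x i ≤ c}

lemma measurableSet_cornerSimplex (n : ℕ) (c : ℝ) : MeasurableSet (cornerSimplex n c) := by
  unfold cornerSimplex; measurability

lemma convex_cornerSimplex (n : ℕ) (c : ℝ) : Convex ℝ (cornerSimplex n c) := by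
  rintro x ⟨hx0, hx⟩ y ⟨hy0, hy⟩ a b ha hb hab
  refine ⟨fun i => ?_, ?_⟩
  · have := hx0 i; have := hy0 i
    simp only [Pi.add_apply, Pi.smul_apply, smul_eq_mul]; positivity
  · simp only [Pi.add_apply, Pi.smul_apply, smul_eq_mul, Finset.sum_add_distrib, ← Finset.mul_sum]
    calc _ ≤ a * c + b * c := by gcongr
      _ = c := by rw [← add_mul, hab, one_mul]

lemma cornerSimplex_eq_empty {n : ℕ} {c : ℝ} (hc : c < 0) : cornerSimplex n c = ∅ :=
  eq_empty_of_forall_notMem fun _ hx =>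
    (Finset.sum_nonneg fun i _ => hx.1 i).not_gt (hx.2.trans_lt hc)

lemma cornerSimplex_succ (n : ℕ) (c : ℝ) :
    cornerSimplex (n + 1) c = MeasurableEquiv.piFinSuccAbove (fun _ => ℝ) 0 ⁻¹'
      {p | 0 ≤ p.1 ∧ p.2 ∈ cornerSimplex n (c - p.1)} := by
  ext x
  simp [cornerSimplex, Fin.forall_fin_succ, Fin.sum_univ_succ, MeasurableEquiv.piFinSuccAbove,
    le_sub_iff_add_le', and_assoc, Fin.tail]

lemma integral_sub_pow_div_factorial (n : ℕ) (c : ℝ) :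
    ∫ x in (0 : ℝ)..c, (c - x) ^ n / n ! = c ^ (n + 1) / (n + 1)! := by
  rw [intervalIntegral.integral_div, intervalIntegral.integral_comp_sub_left (fun x => x ^ n),
    integral_pow, Nat.factorial_succ]
  push_cast
  field_simp
  ring

theorem volume_cornerSimplex (n : ℕ) {c : ℝ} (hc : 0 ≤ c) :
    volume (cornerSimplex n c) = ENNReal.ofReal (c ^ n / n !) := by
  induction n generalizing c with
  | zero => simp [cornerSimplex, hc, volume_pi]
  | succ n ih =>
    have hslice (x : ℝ) : volume {y | 0 ≤ x ∧ y ∈ cornerSimplex n (c - x)} =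
        (Icc 0 c).indicator (fun x => ENNReal.ofReal ((c - x) ^ n / n !)) x := by
      by_cases hx : x ∈ Icc 0 c
      · simp [hx.1, indicator_of_mem hx, ih (sub_nonneg.2 hx.2)]
      · rw [indicator_of_notMem hx]
        rcases not_and_or.1 hx with hx | hx
        · simp [hx]
        · simp [cornerSimplex_eq_empty (sub_neg.2 (not_le.1 hx))]
    have hS : MeasurableSet {p : ℝ × (Fin n → ℝ) | 0 ≤ p.1 ∧ p.2 ∈ cornerSimplex n (c - p.1)} := by
      unfold cornerSimplex; measurability
    rw [cornerSimplex_succ, volume_pi, (measurePreserving_piFinSuccAbove _ 0).measure_preimage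
      hS.nullMeasurableSet, Measure.prod_apply hS]
    simp only [preimage_ofPred_eq, ← volume_pi, hslice]
    rw [lintegral_indicator measurableSet_Icc, ← ofReal_integral_eq_lintegral_ofReal,
      integral_Icc_eq_integral_Ioc, ← intervalIntegral.integral_of_le hc,
      integral_sub_pow_div_factorial]
    · exact (by fun_prop : Continuous fun x : ℝ => (c - x) ^ n / n !).integrableOn_Icc
    · exact ae_restrict_of_forall_mem measurableSet_Icc fun x hx => by
        have := sub_nonneg.2 hx.2; positivity

lemma convexHull_insert_zero_single (n : ℕ) :
    convexHull ℝ (insert 0 (range fun i : Fin n => Pi.single i (1 : ℝ))) = cornerSimplex n 1 := by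
  refine subset_antisymm (convexHull_min ?_ (convex_cornerSimplex n 1)) fun x ⟨hx0, hx⟩ => ?_
  · rintro _ (rfl | ⟨i, rfl⟩)
    · simp [cornerSimplex]
    · refine ⟨fun j => ?_, by simp⟩
      exact (Pi.single_nonneg.2 zero_le_one : (0 : Fin n → ℝ) ≤ Pi.single i 1) j
  · classical
    -- `x = (1 - ∑ xᵢ) • 0 + ∑ xᵢ • eᵢ`, a convex combination indexed by `Option (Fin n)`
    have := (convex_convexHull ℝ (insert 0 (range fun i : Fin n => Pi.single i (1 : ℝ)))).sum_mem
      (t := Finset.univ) (w := fun o : Option (Fin n) => o.elim (1 - ∑ i, x i) x)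
      (z := fun o => o.elim 0 fun i => Pi.single i 1) ?_ ?_ ?_
    · simpa [Fintype.sum_option, ← pi_eq_sum_univ'] using this
    · rintro (_ | i) _
      · simpa using hx
      · exact hx0 i
    · simp [Fintype.sum_option]
    · rintro (_ | i) _ <;> apply subset_convexHull <;> simp

theorem volume_convexHull_insert_zero_range {n : ℕ} (v : Fin n → EuclideanSpace ℝ (Fin n)) :
    volume (convexHull ℝ (insert 0 (range v))) =
      ENNReal.ofReal (|(Matrix.of fun i j => v j i).det| / n !) := by
  set M : Matrix (Fin n) (Fin n) ℝ := Matrix.of fun i j => v j i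
  have hv : v = toEuclideanLin M ∘ WithLp.toLp 2 ∘ fun j => Pi.single j 1 := by
    funext j; ext i; simp [M, toLpLin_apply]
  have himg : convexHull ℝ (insert 0 (range v)) =
      (toEuclideanLin M ∘ₗ (WithLp.linearEquiv 2 ℝ (Fin n → ℝ)).symm.toLinearMap) ''
        cornerSimplex n 1 := by
    rw [← convexHull_insert_zero_single, LinearMap.image_convexHull, image_insert_eq, map_zero,
      ← range_comp, hv]
    rfl
  rw [himg, LinearMap.coe_comp, image_comp, Measure.addHaar_image_linearMap,
    LinearMap.det_toLpLin, LinearEquiv.coe_toLinearMap, WithLp.coe_symm_linearEquiv,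
    image_eq_preimage_of_inverse (WithLp.ofLp_toLp 2) (WithLp.toLp_ofLp 2),
    (PiLp.volume_preserving_ofLp (Fin n)).measure_preimage
      (measurableSet_cornerSimplex n 1).nullMeasurableSet,
    volume_cornerSimplex n zero_le_one, one_pow, ← ENNReal.ofReal_mul (abs_nonneg _), mul_one_div]

theorem toReal_volume_convexHull_vec3_upper (a p q c f i : ℝ) :
    (volume (convexHull ℝ {(0 : Euc 3), vec3 a 0 0, vec3 p q 0, vec3 c f i})).toReal =
      |a * q * i| / 6 := by
  have hset : ({0, vec3 a 0 0, vec3 p q 0, vec3 c f i} : Set (Euc 3)) =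
      insert 0 (range ![vec3 a 0 0, vec3 p q 0, vec3 c f i]) := by
    rw [range_cons, range_cons, range_cons, range_empty, union_empty, ← insert_eq, ← insert_eq]
  rw [hset, volume_convexHull_insert_zero_range, ENNReal.toReal_ofReal (by positivity)]
  simp [det_fin_three, vec3, abs_mul, Nat.factorial]

lemma specNorm_le_of_sum_sq_le {n : ℕ} (A : Matrix (Fin n) (Fin n) ℝ) {C : ℝ} (hC : 0 ≤ C)
    (h : ∑ i, ∑ j, A i j ^ 2 ≤ C ^ 2) : specNorm A ≤ C := by
  refine ContinuousLinearMap.opNorm_le_bound _ hC fun x => ?_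
  rw [LinearMap.coe_toContinuousLinearMap']
  refine (sq_le_sq₀ (norm_nonneg _) (by positivity)).1 ?_
  rw [EuclideanSpace.norm_sq_eq, mul_pow, EuclideanSpace.norm_sq_eq]
  calc ∑ i, ‖toEuclideanLin A x i‖ ^ 2 = ∑ i, (∑ j, A i j * x j) ^ 2 := by
        simp [toLpLin_apply, mulVec, dotProduct]
    _ ≤ ∑ i, (∑ j, A i j ^ 2) * ∑ j, x j ^ 2 :=
        Finset.sum_le_sum fun i _ => Finset.sum_mul_sq_le_sq_mul_sq _ _ _
    _ = (∑ i, ∑ j, A i j ^ 2) * ∑ j, ‖x j‖ ^ 2 := by simp [Finset.sum_mul]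
    _ ≤ C ^ 2 * ∑ j, ‖x j‖ ^ 2 := by gcongr

lemma specNorm_smul {n : ℕ} (c : ℝ) (A : Matrix (Fin n) (Fin n) ℝ) :
    specNorm (c • A) = |c| * specNorm A := by
  simp only [specNorm, map_smul, norm_smul, Real.norm_eq_abs]

lemma specNorm_inv {n : ℕ} (A : Matrix (Fin n) (Fin n) ℝ) :
    specNorm A⁻¹ = |A.det|⁻¹ * specNorm A.adjugate := by
  rw [inv_def, Ring.inverse_eq_inv', specNorm_smul, abs_inv]

lemma specNorm_upper_le_two (s t a b u : ℝ) (hst : s ^ 2 + t ^ 2 = 1)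
    (habu : a ^ 2 + b ^ 2 + u ^ 2 = 1) : specNorm !![1, s, a; 0, t, b; 0, 0, u] ≤ 2 := by
  refine specNorm_le_of_sum_sq_le _ zero_le_two ?_
  simp [Fin.sum_univ_three]
  nlinarith

lemma specNorm_upper_inv_le (s t a b u : ℝ) (hst : s ^ 2 + t ^ 2 = 1)
    (habu : a ^ 2 + b ^ 2 + u ^ 2 = 1) (ht : 0 < t) (hu : 0 < u) :
    specNorm !![1, s, a; 0, t, b; 0, 0, u]⁻¹ ≤ 2 / (t * u) := by
  have hdet : (!![1, s, a; 0, t, b; 0, 0, u]).det = t * u := by simp [det_fin_three]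
  have hadj : specNorm (!![1, s, a; 0, t, b; 0, 0, u]).adjugate ≤ 2 := by
    refine specNorm_le_of_sum_sq_le _ zero_le_two ?_
    simp [adjugate_fin_three, Fin.sum_univ_three]
    -- `(s b - a t)² + (s a + t b)² = (s² + t²)(a² + b²)`
    nlinarith [sq_nonneg (s * a + t * b)]
  rw [specNorm_inv, hdet, abs_of_pos (by positivity), inv_mul_eq_div]
  gcongr

theorem upper_specNorm_condition_det (s t a b u : ℝ) (hst : s ^ 2 + t ^ 2 = 1)
    (habu : a ^ 2 + b ^ 2 + u ^ 2 = 1) (ht : 0 < t) (hu : 0 < u) :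
    specNorm !![1, s, a; 0, t, b; 0, 0, u] ≤ 2 ∧
      ∀ α₁ α₂ α₃ : ℝ, 0 < α₁ → 0 < α₂ → 0 < α₃ →
        specNorm !![1, s, a; 0, t, b; 0, 0, u] * specNorm !![1, s, a; 0, t, b; 0, 0, u]⁻¹ ≤
            2 / 3 * (α₁ * α₂ * α₃) / (|α₁ * (α₂ * t) * (α₃ * u)| / 6) ∧
          |(!![1, s, a; 0, t, b; 0, 0, u] * diagonal ![α₁, α₂, α₃]).det| =
            6 * (|α₁ * (α₂ * t) * (α₃ * u)| / 6) := by
  refine ⟨specNorm_upper_le_two s t a b u hst habu, fun α₁ α₂ α₃ hα₁ hα₂ hα₃ => ⟨?_, ?_⟩⟩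
  · calc _ ≤ 2 * (2 / (t * u)) :=
          mul_le_mul (specNorm_upper_le_two s t a b u hst habu)
            (specNorm_upper_inv_le s t a b u hst habu ht hu) (norm_nonneg _) zero_le_two
      _ = _ := by rw [abs_of_pos (by positivity)]; field_simp; ring
  · rw [det_mul, det_diagonal, Fin.prod_univ_three]
    simp [det_fin_three, abs_mul]
    ring

/-- for `Ã = Ã₁ = [[1, s₁, s₂₁],[0, t₁, s₂₂],[0, 0, t₂]]` (`typ = true`)
or `Ã = Ã₂ = [[1, −s₁, s₂₁],[0, t₁, s₂₂],[0, 0, t₂]]` (`typ = false`), with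
`s₁² + t₁² = 1`, `t₁ > 0`, `s₂₁² + s₂₂² + t₂² = 1`, `t₂ > 0`:
`‖Ã‖₂ ≤ 2`, and for all `α₁, α₂, α₃ > 0`, with `T = Ã·diag(α₁,α₂,α₃)(T̂)` the
corresponding tetrahedron (type i reference for `Ã₁`, type ii for `Ã₂`), one has
`‖Ã‖₂ ‖Ã⁻¹‖₂ ≤ (2/3) α₁α₂α₃ / |T|` and `|det (Ã·diag(α₁,α₂,α₃))| = 6 |T|`. -/
theorem stmt_1 (s₁ t₁ s₂₁ s₂₂ t₂ : ℝ)
    (h1 : s₁ ^ 2 + t₁ ^ 2 = 1) (ht₁ : 0 < t₁)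
    (h2 : s₂₁ ^ 2 + s₂₂ ^ 2 + t₂ ^ 2 = 1) (ht₂ : 0 < t₂) :
    ∀ typ : Bool,
      specNorm (if typ then !![1, s₁, s₂₁; 0, t₁, s₂₂; 0, 0, t₂]
                else !![1, -s₁, s₂₁; 0, t₁, s₂₂; 0, 0, t₂]) ≤ 2 ∧
      ∀ α₁ α₂ α₃ : ℝ, 0 < α₁ → 0 < α₂ → 0 < α₃ →
        (specNorm (if typ then !![1, s₁, s₂₁; 0, t₁, s₂₂; 0, 0, t₂]
              else !![1, -s₁, s₂₁; 0, t₁, s₂₂; 0, 0, t₂]) *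
            specNorm (if typ then !![1, s₁, s₂₁; 0, t₁, s₂₂; 0, 0, t₂]
              else !![1, -s₁, s₂₁; 0, t₁, s₂₂; 0, 0, t₂])⁻¹ ≤
          2 / 3 * (α₁ * α₂ * α₃) /
            (volume (if typ then
                convexHull ℝ {(0 : Euc 3), vec3 α₁ 0 0, vec3 (α₂ * s₁) (α₂ * t₁) 0,
                  vec3 (α₃ * s₂₁) (α₃ * s₂₂) (α₃ * t₂)}
              else
                convexHull ℝ {(0 : Euc 3), vec3 α₁ 0 0, vec3 (α₁ - α₂ * s₁) (α₂ * t₁) 0,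
                  vec3 (α₃ * s₂₁) (α₃ * s₂₂) (α₃ * t₂)})).toReal) ∧
        |((if typ then !![1, s₁, s₂₁; 0, t₁, s₂₂; 0, 0, t₂]
              else !![1, -s₁, s₂₁; 0, t₁, s₂₂; 0, 0, t₂]) *
            Matrix.diagonal ![α₁, α₂, α₃]).det| =
          6 * (volume (if typ then
                convexHull ℝ {(0 : Euc 3), vec3 α₁ 0 0, vec3 (α₂ * s₁) (α₂ * t₁) 0,
                  vec3 (α₃ * s₂₁) (α₃ * s₂₂) (α₃ * t₂)}
              else
                convexHull ℝ {(0 : Euc 3), vec3 α₁ 0 0, vec3 (α₁ - α₂ * s₁) (α₂ * t₁) 0,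
                  vec3 (α₃ * s₂₁) (α₃ * s₂₂) (α₃ * t₂)})).toReal := by
  intro typ
  cases typ
  · simpa only [Bool.false_eq_true, if_false, toReal_volume_convexHull_vec3_upper] using
      upper_specNorm_condition_det (-s₁) t₁ s₂₁ s₂₂ t₂ (by rwa [neg_sq]) h2 ht₁ ht₂
  · simpa only [if_true, toReal_volume_convexHull_vec3_upper] using
      upper_specNorm_condition_det s₁ t₁ s₂₁ s₂₂ t₂ h1 h2 ht₁ ht₂
end
end

section
/- Let T ⊂ ℝ³ be a tetrahedron in standard position (d = 3, type i or type ii) satisfying Condition 2. Then (1/2)·H_{T₀} < H_T < 2·H_{T₀}, where H_T := (α₁α₂α₃/|T|)·h_T and H_{T₀} := (h_T²/|T|)·min_{i≠j} |L_i||L_j| is computed from the edge lengths L_i, the diameter h_T, and the volume |T| of T. -/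
/-!
Let `m` be the smallest product of two distinct edge lengths and `h` the diameter; the claim
says `h * m < 2 α₁α₂α₃` and `α₁α₂α₃ < 2 m h`. The first follows from `m ≤ α₂α₃` (shortest edge
times `|x₁x₄|`) and `h < 2 α₁`: by Condition 2 every edge is at most `α₁`, except the one opposite
the shortest edge, which is shorter than `2 α₁` by the strict triangle inequality. For the second,
every edge other than the shortest one is longer than `α₁ / 2` or than `α₃ / 2`, while
`α₁, α₃ ≤ h`: for the edges with an `x`-coordinate difference of at least `α₁ / 2` this is where
`α s ≤ α₁ / 2` enters, and for `x₃x₄` it is Apollonius' theorem in the triangle spanned by the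
shortest edge and `x₄`. All inequalities are strict because `x₄` lies off the plane of the other
three vertices, which also makes the volume positive.
-/

open MeasureTheory ENNReal

noncomputable section

open Metric

section OffDiagProducts

variable {ι : Type*} (L : ι → ℝ)

def offDiagProducts : Set ℝ := {x | ∃ i j, i ≠ j ∧ x = L i * L j}

theorem offDiagProducts_comp_equiv (σ : ι ≃ ι) : offDiagProducts (L ∘ σ) = offDiagProducts L := by
  ext x
  constructor
  · rintro ⟨i, j, hij, rfl⟩
    exact ⟨σ i, σ j, σ.injective.ne hij, rfl⟩
  · rintro ⟨i, j, hij, rfl⟩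
    exact ⟨σ.symm i, σ.symm j, σ.symm.injective.ne hij, by simp⟩

variable [Finite ι]

theorem offDiagProducts_finite : (offDiagProducts L).Finite :=
  (Set.finite_range fun p : ι × ι => L p.1 * L p.2).subset
    fun _ ⟨i, j, _, hx⟩ => ⟨(i, j), hx.symm⟩

variable {L} {k j : ι}

theorem sInf_offDiagProducts_le (hkj : k ≠ j) : sInf (offDiagProducts L) ≤ L k * L j :=
  csInf_le (offDiagProducts_finite L).bddBelow ⟨k, j, hkj, rfl⟩

theorem sInf_offDiagProducts_mem (hkj : k ≠ j) : sInf (offDiagProducts L) ∈ offDiagProducts L :=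
  Set.Nonempty.csInf_mem ⟨_, k, j, hkj, rfl⟩ (offDiagProducts_finite L)

end OffDiagProducts

theorem mul_lt_two_mul_mul_of_lt_two_mul {α₁ α₃ ℓ h : ℝ} (hα₁ : 0 < α₁) (hα₃ : 0 < α₃)
    (h₁ : α₁ ≤ h) (h₃ : α₃ ≤ h) (hℓ : α₁ < 2 * ℓ ∨ α₃ < 2 * ℓ) : α₁ * α₃ < 2 * ℓ * h := by
  rcases hℓ with hℓ | hℓ
  · calc α₁ * α₃ < 2 * ℓ * α₃ := by gcongr
      _ ≤ 2 * ℓ * h := by gcongr; linarith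
  · calc α₁ * α₃ < α₁ * (2 * ℓ) := by gcongr
      _ ≤ h * (2 * ℓ) := by gcongr; linarith
      _ = 2 * ℓ * h := by ring

theorem half_lt_and_lt_two_of_mul_lt {P V h m : ℝ} (hV : 0 < V) (hh : 0 < h)
    (hlo : P < 2 * (m * h)) (hhi : h * m < 2 * P) :
    1 / 2 * (h ^ 2 / V * m) < P / V * h ∧ P / V * h < 2 * (h ^ 2 / V * m) := by
  constructor
  · rw [show 1 / 2 * (h ^ 2 / V * m) = h * (h * m) / (2 * V) by field_simp,
      show P / V * h = h * (2 * P) / (2 * V) by field_simp]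
    gcongr
  · rw [show 2 * (h ^ 2 / V * m) = h * (2 * (m * h)) / V by field_simp,
      show P / V * h = h * P / V by ring]
    gcongr

theorem H_bounds_of_edges {ι : Type*} [Finite ι] {L : ι → ℝ} {k j : ι} {α₁ α₂ α₃ h V : ℝ}
    (hα₂ : 0 < α₂) (hα₃ : 0 < α₃) (hV : 0 < V)
    (hkj : k ≠ j) (hk : L k = α₂) (hj : L j ≤ α₃) (hmin : ∀ i, α₂ ≤ L i)
    (h₁ : α₁ ≤ h) (h₃ : α₃ ≤ h) (h₂ : h < 2 * α₁)
    (hlong : ∀ i ≠ k, α₁ < 2 * L i ∨ α₃ < 2 * L i) :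
    1 / 2 * (h ^ 2 / V * sInf (offDiagProducts L)) < α₁ * α₂ * α₃ / V * h ∧
      α₁ * α₂ * α₃ / V * h < 2 * (h ^ 2 / V * sInf (offDiagProducts L)) := by
  have hh : 0 < h := hα₃.trans_le h₃
  have hα₁ : 0 < α₁ := by linarith
  obtain ⟨a, b, hab, hm⟩ := sInf_offDiagProducts_mem (L := L) hkj
  -- one of the two edges realising the minimum is not the shortest edge
  have hlo : α₁ * α₂ * α₃ < 2 * (L a * L b * h) := by
    wlog hb : b ≠ k generalizing a b
    · rw [mul_comm (L a)]
      exact this b a hab.symm (by rw [hm, mul_comm]) (by rintro rfl; exact hb hab.symm)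
    calc α₁ * α₂ * α₃ = α₂ * (α₁ * α₃) := by ring
      _ ≤ L a * (α₁ * α₃) := by gcongr; exact hmin a
      _ < L a * (2 * L b * h) :=
        mul_lt_mul_of_pos_left (mul_lt_two_mul_mul_of_lt_two_mul hα₁ hα₃ h₁ h₃ (hlong b hb))
          (hα₂.trans_le (hmin a))
      _ = 2 * (L a * L b * h) := by ring
  have hhi : h * sInf (offDiagProducts L) < 2 * (α₁ * α₂ * α₃) :=
    calc h * sInf (offDiagProducts L) ≤ h * (α₂ * α₃) := by
          gcongr
          calc sInf (offDiagProducts L) ≤ L k * L j := sInf_offDiagProducts_le hkj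
            _ ≤ α₂ * α₃ := by rw [hk]; gcongr
      _ < 2 * α₁ * (α₂ * α₃) := by gcongr
      _ = 2 * (α₁ * α₂ * α₃) := by ring
  exact half_lt_and_lt_two_of_mul_lt hV hh (hm ▸ hlo) hhi

theorem dist_lt_two_mul_of_midpoint_ne {E : Type*} [NormedAddCommGroup E] [InnerProductSpace ℝ E]
    {p q r : E} {D : ℝ} (hp : dist q p ≤ D) (hr : dist q r ≤ D) (hq : midpoint ℝ p r ≠ q) :
    dist p r < 2 * D := by
  have apollonius :=
    EuclideanGeometry.dist_sq_add_dist_sq_eq_two_mul_dist_midpoint_sq_add_half_dist_sq q p r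
  have hm : 0 < dist q (midpoint ℝ p r) := dist_pos.mpr hq.symm
  have hD : 0 ≤ D := dist_nonneg.trans hp
  have : dist p r ^ 2 < (2 * D) ^ 2 := by
    nlinarith [pow_le_pow_left₀ dist_nonneg hp 2, pow_le_pow_left₀ dist_nonneg hr 2, pow_pos hm 2]
  exact lt_of_pow_lt_pow_left₀ 2 (by positivity) this

theorem Set.Finite.diam_lt {E : Type*} [PseudoMetricSpace E] {s : Set E} (hs : s.Finite) {r : ℝ}
    (hr : 0 < r) (h : ∀ x ∈ s, ∀ y ∈ s, dist x y < r) : diam s < r := by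
  rcases s.eq_empty_or_nonempty with rfl | hne
  · simpa using hr
  obtain ⟨⟨x, y⟩, ⟨hx, hy⟩, hmax⟩ :=
    Set.exists_max_image _ (fun p : E × E => dist p.1 p.2) (hs.prod hs) (hne.prod hne)
  exact (diam_le_of_forall_dist_le dist_nonneg fun a ha b hb => hmax (a, b) ⟨ha, hb⟩).trans_lt
    (h x hx y hy)

theorem diam_convexHull_four_lt {E : Type*} [NormedAddCommGroup E] [NormedSpace ℝ E]
    {P Q R S : E} {r : ℝ}
    (hr : 0 < r) (hPQ : dist P Q < r) (hPR : dist P R < r) (hPS : dist P S < r)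
    (hQR : dist Q R < r) (hQS : dist Q S < r) (hRS : dist R S < r) :
    diam (convexHull ℝ {P, Q, R, S}) < r := by
  rw [convexHull_diam]
  refine (Set.toFinite _).diam_lt hr ?_
  simp only [Set.mem_insert_iff, Set.mem_singleton_iff]
  rintro x (rfl | rfl | rfl | rfl) y (rfl | rfl | rfl | rfl) <;>
    first | rwa [dist_self] | assumption | rwa [dist_comm]

theorem tetrahedron_H_bounds {E : Type*} [NormedAddCommGroup E] [InnerProductSpace ℝ E]
    {P Q R S : E} {α₁ α₂ α₃ V : ℝ} {L : Fin 6 → ℝ} (σ : Equiv.Perm (Fin 6))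
    (hL : L = ![dist P Q, dist P R, dist P S, dist Q R, dist Q S, dist R S] ∘ σ)
    (hα₂ : 0 < α₂) (hV : 0 < V) (hmin : ∀ i, α₂ ≤ L i)
    (hPQ : dist P Q = α₁) (hPR : dist P R = α₂) (hα₃ : min (dist P S) (dist Q S) = α₃)
    (hPS : dist P S ≤ α₁) (hQR : dist Q R ≤ α₁) (hRS : dist R S ≤ α₁)
    (hQR₁ : α₁ < 2 * dist Q R) (hR : midpoint ℝ P S ≠ R) (hP : midpoint ℝ Q S ≠ P) :
    1 / 2 * (diam (convexHull ℝ {P, Q, R, S}) ^ 2 / V * sInf (offDiagProducts L)) <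
        α₁ * α₂ * α₃ / V * diam (convexHull ℝ {P, Q, R, S}) ∧
      α₁ * α₂ * α₃ / V * diam (convexHull ℝ {P, Q, R, S}) <
        2 * (diam (convexHull ℝ {P, Q, R, S}) ^ 2 / V * sInf (offDiagProducts L)) := by
  set L' := ![dist P Q, dist P R, dist P S, dist Q R, dist Q S, dist R S]
  have hmin' : ∀ i, α₂ ≤ L' i := fun i => by simpa [hL] using hmin (σ.symm i)
  rw [hL, offDiagProducts_comp_equiv]
  have hPS₃ : α₃ ≤ dist P S := hα₃ ▸ min_le_left _ _
  have hQS₃ : α₃ ≤ dist Q S := hα₃ ▸ min_le_right _ _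
  have hα₃pos : 0 < α₃ := hα₃ ▸ lt_min (hα₂.trans_le (hmin' 2)) (hα₂.trans_le (hmin' 4))
  have hRS₃ : α₃ < 2 * dist R S := hPS₃.trans_lt <|
    dist_lt_two_mul_of_midpoint_ne (by rw [dist_comm, hPR]; exact hmin' 5) le_rfl hR
  have hQS : dist Q S < 2 * α₁ :=
    dist_lt_two_mul_of_midpoint_ne (by rw [hPQ]) hPS hP
  have hbdd : Bornology.IsBounded (convexHull ℝ {P, Q, R, S}) :=
    ((Set.toFinite _).isCompact_convexHull ℝ).isBounded
  have hsub : ({P, Q, R, S} : Set E) ⊆ convexHull ℝ {P, Q, R, S} := subset_convexHull ℝ _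
  have h₁ : α₁ ≤ diam (convexHull ℝ {P, Q, R, S}) :=
    hPQ ▸ dist_le_diam_of_mem hbdd (hsub (by simp)) (hsub (by simp))
  have h₃ : α₃ ≤ diam (convexHull ℝ {P, Q, R, S}) :=
    hPS₃.trans (dist_le_diam_of_mem hbdd (hsub (by simp)) (hsub (by simp)))
  have h₂ : diam (convexHull ℝ {P, Q, R, S}) < 2 * α₁ := by
    have : α₂ ≤ dist P Q := hmin' 0
    apply diam_convexHull_four_lt <;> linarith
  obtain ⟨j, hj1, hj⟩ : ∃ j, j ≠ 1 ∧ L' j ≤ α₃ := by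
    rcases min_le_iff.mp hα₃.le with h | h
    exacts [⟨2, by decide, h⟩, ⟨4, by decide, h⟩]
  refine H_bounds_of_edges hα₂ hα₃pos hV hj1.symm hPR hj hmin' h₁ h₃ h₂ fun i hi => ?_
  fin_cases i
  · exact .inl (show α₁ < 2 * dist P Q by linarith)
  · exact absurd rfl hi
  · exact .inr (show α₃ < 2 * dist P S by linarith)
  · exact .inl hQR₁
  · exact .inr (show α₃ < 2 * dist Q S by linarith)
  · exact .inr hRS₃

theorem volume_convexHull_pos {E : Type*} [NormedAddCommGroup E] [NormedSpace ℝ E]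
    [FiniteDimensional ℝ E] [MeasurableSpace E] [BorelSpace E] (μ : Measure E)
    [μ.IsAddHaarMeasure] {s : Set E} (hs : s.Finite) (hspan : affineSpan ℝ s = ⊤) :
    0 < (μ (convexHull ℝ s)).toReal := by
  have hint : (interior (convexHull ℝ s)).Nonempty := by
    rwa [(convex_convexHull ℝ s).interior_nonempty_iff_affineSpan_eq_top, affineSpan_convexHull]
  exact ENNReal.toReal_pos (μ.measure_pos_of_nonempty_interior hint).ne'
    (hs.isCompact_convexHull ℝ).measure_lt_top.ne

theorem vec3_zero : vec3 0 0 0 = 0 := by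
  ext i; fin_cases i <;> rfl

theorem affineSpan_vec3_eq_top {a u v w z e : ℝ} (ha : a ≠ 0) (hv : v ≠ 0) (he : e ≠ 0) :
    affineSpan ℝ {vec3 0 0 0, vec3 a 0 0, vec3 u v 0, vec3 w z e} = ⊤ := by
  rw [AffineSubspace.affineSpan_eq_top_iff_vectorSpan_eq_top_of_nonempty ℝ _ _
    ⟨vec3 0 0 0, by simp⟩, eq_top_iff]
  intro y _
  have mem {p : Euc 3} (hp : p ∈ ({vec3 0 0 0, vec3 a 0 0, vec3 u v 0, vec3 w z e} : Set (Euc 3))) :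
      p ∈ vectorSpan ℝ {vec3 0 0 0, vec3 a 0 0, vec3 u v 0, vec3 w z e} := by
    simpa [vec3_zero] using vsub_mem_vectorSpan ℝ hp (by simp : vec3 0 0 0 ∈ _)
  -- solve the triangular system for the coordinates of `y`
  have hy : y = ((y 0 - ((y 1 - y 2 / e * z) / v) * u - y 2 / e * w) / a) • vec3 a 0 0
      + ((y 1 - y 2 / e * z) / v) • vec3 u v 0 + (y 2 / e) • vec3 w z e := by
    ext i
    fin_cases i <;> simp [vec3] <;> field_simp <;> ring
  rw [hy]
  exact add_mem (add_mem (Submodule.smul_mem _ _ (mem (by simp)))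
    (Submodule.smul_mem _ _ (mem (by simp)))) (Submodule.smul_mem _ _ (mem (by simp)))

theorem dist_vec3_sq (a b c a' b' c' : ℝ) :
    dist (vec3 a b c) (vec3 a' b' c') ^ 2 = (a - a') ^ 2 + (b - b') ^ 2 + (c - c') ^ 2 := by
  rw [EuclideanSpace.dist_eq, Real.sq_sqrt (by positivity)]
  simp [vec3, Fin.sum_univ_three, Real.dist_eq, sq_abs]

theorem abs_sub_lt_dist_vec3 {a b c a' b' c' : ℝ} (h : b ≠ b' ∨ c ≠ c') :
    |a - a'| < dist (vec3 a b c) (vec3 a' b' c') := by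
  refine abs_lt_of_sq_lt_sq ?_ dist_nonneg
  rw [dist_vec3_sq]
  have := sq_nonneg (b - b')
  have := sq_nonneg (c - c')
  rcases h with h | h <;> linarith [sq_pos_of_ne_zero (sub_ne_zero.mpr h)]

theorem dist_origin_le_dist_vec3 {α a b c : ℝ} (hα : 0 ≤ α) (ha : a ≤ α / 2) :
    dist (vec3 0 0 0) (vec3 a b c) ≤ dist (vec3 α 0 0) (vec3 a b c) := by
  refine (sq_le_sq₀ dist_nonneg dist_nonneg).mp ?_
  rw [dist_vec3_sq, dist_vec3_sq]
  nlinarith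

theorem midpoint_vec3_ne {a b a' b' c a'' b'' : ℝ} (hc : c ≠ 0) :
    midpoint ℝ (vec3 a b 0) (vec3 a' b' c) ≠ vec3 a'' b'' 0 := by
  intro h
  exact hc (by simpa [midpoint_eq_smul_add, vec3] using congrArg (fun x : Euc 3 => x 2) h)

theorem stmt_3_general (α₁ α₂ α₃ s₁ t₁ s₂₁ s₂₂ t₂ : ℝ)
    (hα₁ : 0 < α₁) (hα₂ : 0 < α₂) (hα₃ : 0 < α₃)
    (ht₁ : 0 < t₁) (hc1 : α₂ * s₁ ≤ α₁ / 2)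
    (h2 : s₂₁ ^ 2 + s₂₂ ^ 2 + t₂ ^ 2 = 1) (ht₂ : 0 < t₂) (hc2 : α₃ * s₂₁ ≤ α₁ / 2) :
    ∀ typ : Bool,
    ∀ x₁ x₂ x₃ x₄ : Euc 3,
      x₁ = 0 → x₂ = vec3 α₁ 0 0 →
      x₃ = (if typ then vec3 (α₂ * s₁) (α₂ * t₁) 0 else vec3 (α₁ - α₂ * s₁) (α₂ * t₁) 0) →
      x₄ = vec3 (α₃ * s₂₁) (α₃ * s₂₂) (α₃ * t₂) →
    ∀ L : Fin 6 → ℝ,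
      L = ![dist x₁ x₂, dist x₁ x₃, dist x₁ x₄, dist x₂ x₃, dist x₂ x₄, dist x₃ x₄] →
    -- Condition 2: `α₂` is the length of the minimum edge `L_min`,
    -- whose endpoints are `{x₁, x₃}` (type i) or `{x₂, x₃}` (type ii);
    (∀ i : Fin 6, α₂ ≤ L i) →
    α₂ = (if typ then dist x₁ x₃ else dist x₂ x₃) →
    -- `α₁ = |x₁ − x₂|` is the length of the longest edge among the four edges
    -- sharing an endpoint with `L_min`;
    (if typ then
        dist x₁ x₄ ≤ dist x₁ x₂ ∧ dist x₂ x₃ ≤ dist x₁ x₂ ∧ dist x₃ x₄ ≤ dist x₁ x₂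
      else
        dist x₂ x₄ ≤ dist x₁ x₂ ∧ dist x₁ x₃ ≤ dist x₁ x₂ ∧ dist x₃ x₄ ≤ dist x₁ x₂) →
    ∀ T : Set (Euc 3), T = convexHull ℝ {x₁, x₂, x₃, x₄} →
    ∀ hT HT HT₀ : ℝ,
      hT = Metric.diam T →
      HT = α₁ * α₂ * α₃ / (volume T).toReal * hT →
      HT₀ = hT ^ 2 / (volume T).toReal * sInf {x | ∃ i j : Fin 6, i ≠ j ∧ x = L i * L j} →
      (1 / 2) * HT₀ < HT ∧ HT < 2 * HT₀ := by
  intro typ x₁ x₂ x₃ x₄ hx₁ hx₂ hx₃ hx₄ L hL hmin hα₂L hcond T hT h HT HT₀ hh hHT hHT₀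
  subst hT hh hHT hHT₀
  rw [← vec3_zero] at hx₁
  obtain ⟨u, hu⟩ : ∃ u, x₃ = vec3 u (α₂ * t₁) 0 := by cases typ <;> exact ⟨_, hx₃⟩
  have hV : 0 < (volume (convexHull ℝ {x₁, x₂, x₃, x₄})).toReal := by
    rw [hx₁, hx₂, hu, hx₄]
    exact volume_convexHull_pos _ (Set.toFinite _)
      (affineSpan_vec3_eq_top hα₁.ne' (by positivity) (by positivity))
  have h₁₂ : dist x₁ x₂ = α₁ := by
    rw [← sq_eq_sq₀ dist_nonneg hα₁.le, hx₁, hx₂, dist_vec3_sq]; ring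
  have h₁₄ : dist x₁ x₄ = α₃ := by
    rw [← sq_eq_sq₀ dist_nonneg hα₃.le, hx₁, hx₄, dist_vec3_sq]
    linear_combination α₃ ^ 2 * h2
  have h₁₄₂₄ : dist x₁ x₄ ≤ dist x₂ x₄ := by
    rw [hx₁, hx₂, hx₄]; exact dist_origin_le_dist_vec3 hα₁.le hc2
  have hx₄₃ : α₃ * t₂ ≠ 0 := by positivity
  have hm₁₃ : midpoint ℝ x₁ x₄ ≠ x₃ := by rw [hx₁, hx₄, hu]; exact midpoint_vec3_ne hx₄₃
  have hm₂₃ : midpoint ℝ x₂ x₄ ≠ x₃ := by rw [hx₂, hx₄, hu]; exact midpoint_vec3_ne hx₄₃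
  have hm₂₁ : midpoint ℝ x₂ x₄ ≠ x₁ := by rw [hx₂, hx₄, hx₁]; exact midpoint_vec3_ne hx₄₃
  have hm₁₂ : midpoint ℝ x₁ x₄ ≠ x₂ := by rw [hx₂, hx₄, hx₁]; exact midpoint_vec3_ne hx₄₃
  have hα₂t₁ : α₂ * t₁ ≠ 0 := by positivity
  cases typ
  · simp only [Bool.false_eq_true, if_false] at hx₃ hα₂L hcond
    obtain ⟨h₂₄, h₁₃, h₃₄⟩ := hcond
    -- type ii is type i with the roles of `x₁` and `x₂` exchanged
    rw [Set.insert_comm x₁ x₂] at hV ⊢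
    refine tetrahedron_H_bounds (Equiv.swap 1 3 * Equiv.swap 2 4) ?_ hα₂ hV hmin
      (by rw [dist_comm, h₁₂]) hα₂L.symm (by rw [min_eq_right h₁₄₂₄, h₁₄]) (h₁₂ ▸ h₂₄)
      (h₁₂ ▸ h₁₃) (h₁₂ ▸ h₃₄) ?_ hm₂₃ hm₁₂
    · rw [hL]; funext i; fin_cases i <;> first | rfl | exact dist_comm _ _
    · rw [hx₁, hx₃]
      linarith [neg_le_abs (0 - (α₁ - α₂ * s₁)),
        abs_sub_lt_dist_vec3 (a := 0) (a' := α₁ - α₂ * s₁) (c := 0) (c' := 0) (.inl hα₂t₁.symm)]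
  · simp only [if_true] at hx₃ hα₂L hcond
    obtain ⟨h₁₄₁₂, h₂₃, h₃₄⟩ := hcond
    refine tetrahedron_H_bounds 1 hL hα₂ hV hmin h₁₂ hα₂L.symm (by rw [min_eq_left h₁₄₂₄, h₁₄])
      (h₁₂ ▸ h₁₄₁₂) (h₁₂ ▸ h₂₃) (h₁₂ ▸ h₃₄) ?_ hm₁₃ hm₂₁
    rw [hx₂, hx₃]
    linarith [le_abs_self (α₁ - α₂ * s₁),
      abs_sub_lt_dist_vec3 (a := α₁) (a' := α₂ * s₁) (c := 0) (c' := 0) (.inl hα₂t₁.symm)]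

/-- for a tetrahedron `T` in standard position (type i when `typ = true`,
type ii when `typ = false`) satisfying Condition 2, one has
`(1/2)·H_{T₀} < H_T < 2·H_{T₀}`, where `H_T = (α₁α₂α₃/|T|)·h_T` and
`H_{T₀} = (h_T²/|T|)·min_{i≠j} |L_i||L_j|`. -/
theorem stmt_3 (α₁ α₂ α₃ s₁ t₁ s₂₁ s₂₂ t₂ : ℝ)
    (hα₁ : 0 < α₁) (hα₂ : 0 < α₂) (hα₃ : 0 < α₃)
    (h1 : s₁ ^ 2 + t₁ ^ 2 = 1) (hs₁ : 0 < s₁) (ht₁ : 0 < t₁) (hc1 : α₂ * s₁ ≤ α₁ / 2)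
    (h2 : s₂₁ ^ 2 + s₂₂ ^ 2 + t₂ ^ 2 = 1) (ht₂ : 0 < t₂) (hc2 : α₃ * s₂₁ ≤ α₁ / 2) :
    ∀ typ : Bool,
    ∀ x₁ x₂ x₃ x₄ : Euc 3,
      x₁ = 0 → x₂ = vec3 α₁ 0 0 →
      x₃ = (if typ then vec3 (α₂ * s₁) (α₂ * t₁) 0 else vec3 (α₁ - α₂ * s₁) (α₂ * t₁) 0) →
      x₄ = vec3 (α₃ * s₂₁) (α₃ * s₂₂) (α₃ * t₂) →
    ∀ L : Fin 6 → ℝ,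
      L = ![dist x₁ x₂, dist x₁ x₃, dist x₁ x₄, dist x₂ x₃, dist x₂ x₄, dist x₃ x₄] →
    -- Condition 2: `α₂` is the length of the minimum edge `L_min`,
    -- whose endpoints are `{x₁, x₃}` (type i) or `{x₂, x₃}` (type ii);
    (∀ i : Fin 6, α₂ ≤ L i) →
    α₂ = (if typ then dist x₁ x₃ else dist x₂ x₃) →
    -- `α₁ = |x₁ − x₂|` is the length of the longest edge among the four edges
    -- sharing an endpoint with `L_min`;
    (if typ then
        dist x₁ x₄ ≤ dist x₁ x₂ ∧ dist x₂ x₃ ≤ dist x₁ x₂ ∧ dist x₃ x₄ ≤ dist x₁ x₂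
      else
        dist x₂ x₄ ≤ dist x₁ x₂ ∧ dist x₁ x₃ ≤ dist x₁ x₂ ∧ dist x₃ x₄ ≤ dist x₁ x₂) →
    ∀ T : Set (Euc 3), T = convexHull ℝ {x₁, x₂, x₃, x₄} →
    ∀ hT HT HT₀ : ℝ,
      hT = Metric.diam T →
      HT = α₁ * α₂ * α₃ / (volume T).toReal * hT →
      HT₀ = hT ^ 2 / (volume T).toReal * sInf {x | ∃ i j : Fin 6, i ≠ j ∧ x = L i * L j} →
      (1 / 2) * HT₀ < HT ∧ HT < 2 * HT₀ :=
  stmt_3_general α₁ α₂ α₃ s₁ t₁ s₂₁ s₂₂ t₂ hα₁ hα₂ hα₃ ht₁ hc1 h2 ht₂ hc2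
end
end

section
/- For every nondegenerate triangle T₀ in the Euclidean plane, the quantity H_{T₀} is equivalent to the circumradius R₂ of T₀; explicitly, 4·R₂ ≤ H_{T₀} ≤ 8·R₂. -/
open MeasureTheory ENNReal

noncomputable section

/-! The area of a triangle is half the absolute value of the determinant of two edge vectors,
which equals `|AB| · |AC| · sin ∠A / 2`; together with the law of sines `|BC| = 2 R₂ sin ∠A`
this gives `|AB| · |AC| · |BC| = 4 R₂ |T₀|`. Writing the sides as `min ≤ mid ≤ max`, this turns
`H_{T₀}` into `4 R₂ · max / mid`, and `1 ≤ max / mid ≤ 2` by the triangle inequality. -/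

open Set
open scoped Pointwise RealInnerProductSpace

theorem volume_stdTriangle_prod :
    volume {p : ℝ × ℝ | 0 ≤ p.1 ∧ 0 ≤ p.2 ∧ p.1 + p.2 ≤ 1} = ENNReal.ofReal (1 / 2) := by
  have hmeas : MeasurableSet {p : ℝ × ℝ | 0 ≤ p.1 ∧ 0 ≤ p.2 ∧ p.1 + p.2 ≤ 1} := by
    measurability
  have hslice (x : ℝ) : volume (Prod.mk x ⁻¹' {p : ℝ × ℝ | 0 ≤ p.1 ∧ 0 ≤ p.2 ∧ p.1 + p.2 ≤ 1})
      = (Icc 0 1).indicator (fun x => ENNReal.ofReal (1 - x)) x := by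
    by_cases hx : 0 ≤ x
    · have : Prod.mk x ⁻¹' {p : ℝ × ℝ | 0 ≤ p.1 ∧ 0 ≤ p.2 ∧ p.1 + p.2 ≤ 1} = Icc 0 (1 - x) := by
        ext y
        simp only [mem_preimage, mem_Icc]
        exact ⟨fun h => ⟨h.2.1, by linarith [h.2.2]⟩, fun h => ⟨hx, h.1, by linarith [h.2]⟩⟩
      by_cases hx1 : x ≤ 1
      · simp [this, hx, hx1]
      · simp [this, hx1]
    · simp [hx]
  have hintegral : ∫ x in Icc (0 : ℝ) 1, 1 - x = 1 / 2 := by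
    rw [integral_Icc_eq_integral_Ioc, ← intervalIntegral.integral_of_le zero_le_one,
      intervalIntegral.integral_sub intervalIntegrable_const intervalIntegral.intervalIntegrable_id]
    norm_num
  rw [Measure.volume_eq_prod, Measure.prod_apply hmeas]
  simp only [hslice]
  rw [lintegral_indicator measurableSet_Icc, ← hintegral, ofReal_integral_eq_lintegral_ofReal]
  · exact (continuous_const.sub continuous_id).integrableOn_Icc
  · exact (ae_restrict_iff' measurableSet_Icc).2 (ae_of_all _ fun x hx => by simp [hx.2])

theorem convexHull_stdTriangle :
    convexHull ℝ {0, EuclideanSpace.single 0 1, EuclideanSpace.single 1 1}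
      = {x : Euc 2 | 0 ≤ x 0 ∧ 0 ≤ x 1 ∧ x 0 + x 1 ≤ 1} := by
  refine subset_antisymm (convexHull_min ?_ ?_) fun x ⟨h0, h1, h01⟩ => ?_
  · rintro x (rfl | rfl | rfl) <;> simp
  · intro x ⟨hx0, hx1, hx⟩ y ⟨hy0, hy1, hy⟩ a b ha hb hab
    simp only [mem_ofPred_eq, PiLp.add_apply, PiLp.smul_apply, smul_eq_mul]
    exact ⟨by positivity, by positivity, by nlinarith⟩
  · have hcombo := (convex_convexHull ℝ
      ({0, EuclideanSpace.single 0 1, EuclideanSpace.single 1 1} : Set (Euc 2))).sum_mem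
      (t := Finset.univ) (w := ![1 - x 0 - x 1, x 0, x 1])
      (z := ![0, EuclideanSpace.single 0 1, EuclideanSpace.single 1 1])
      (by intro i _; fin_cases i <;> simp <;> linarith) (by simp [Fin.sum_univ_three]; ring)
      (by intro i _; fin_cases i <;> apply subset_convexHull <;> simp)
    convert hcombo
    ext i; fin_cases i <;> simp [Fin.sum_univ_three]

theorem volume_stdTriangle :
    volume (convexHull ℝ {0, EuclideanSpace.single 0 1, EuclideanSpace.single 1 1} : Set (Euc 2))
      = ENNReal.ofReal (1 / 2) := by
  have hcoord : MeasurePreserving (fun x : Euc 2 => (x 0, x 1)) :=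
    (volume_preserving_finTwoArrow ℝ).comp (PiLp.volume_preserving_ofLp (Fin 2))
  rw [convexHull_stdTriangle, ← volume_stdTriangle_prod]
  exact hcoord.measure_preimage (by measurability :
    MeasurableSet {p : ℝ × ℝ | 0 ≤ p.1 ∧ 0 ≤ p.2 ∧ p.1 + p.2 ≤ 1}).nullMeasurableSet

theorem volume_convexHull_zero (u v : Euc 2) :
    volume (convexHull ℝ {0, u, v})
      = ENNReal.ofReal (|(EuclideanSpace.basisFun (Fin 2) ℝ).toBasis.det ![u, v]| / 2) := by
  set b := (EuclideanSpace.basisFun (Fin 2) ℝ).toBasis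
  set L := b.constr ℝ ![u, v]
  have hdet : LinearMap.det L = b.det ![u, v] := by
    rw [Module.Basis.det_apply, Module.Basis.toMatrix_eq_toMatrix_constr, LinearMap.det_toMatrix]
    rfl
  have hL (i : Fin 2) : L (EuclideanSpace.single i 1) = ![u, v] i := by
    rw [← EuclideanSpace.basisFun_apply, ← OrthonormalBasis.coe_toBasis, Module.Basis.constr_basis]
  have himage : L '' convexHull ℝ {0, EuclideanSpace.single 0 1, EuclideanSpace.single 1 1}
      = convexHull ℝ {0, u, v} := by
    rw [L.image_convexHull, image_insert_eq, image_insert_eq, image_singleton, map_zero, hL, hL]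
    rfl
  rw [← himage, Measure.addHaar_image_linearMap, volume_stdTriangle, hdet,
    ← ENNReal.ofReal_mul (abs_nonneg _), mul_one_div]

open InnerProductGeometry in
theorem abs_det_basisFun_eq_norm_mul_norm_mul_sin_angle (u v : Euc 2) :
    |(EuclideanSpace.basisFun (Fin 2) ℝ).toBasis.det ![u, v]|
      = ‖u‖ * ‖v‖ * Real.sin (angle u v) := by
  have hdet : (EuclideanSpace.basisFun (Fin 2) ℝ).toBasis.det ![u, v]
      = u 0 * v 1 - v 0 * u 1 := by
    simp [Module.Basis.det_apply, Matrix.det_fin_two, Module.Basis.toMatrix_apply]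
  have hlagrange : ⟪u, u⟫ * ⟪v, v⟫ - ⟪u, v⟫ * ⟪u, v⟫ = (u 0 * v 1 - v 0 * u 1) ^ 2 := by
    simp only [PiLp.inner_apply, Fin.sum_univ_two, RCLike.inner_apply, conj_trivial]
    ring
  rw [mul_comm, sin_angle_mul_norm_mul_norm, hlagrange, Real.sqrt_sq_eq_abs, hdet]

open EuclideanGeometry

theorem volume_convexHull_triangle (A B C : Euc 2) :
    volume (convexHull ℝ {A, B, C})
      = ENNReal.ofReal (dist A B * dist A C * Real.sin (∠ B A C) / 2) := by
  have htranslate : ({A, B, C} : Set (Euc 2)) = A +ᵥ ({0, B - A, C - A} : Set (Euc 2)) := by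
    simp [vadd_set_insert]
  rw [htranslate, convexHull_vadd, measure_vadd, volume_convexHull_zero,
    abs_det_basisFun_eq_norm_mul_norm_mul_sin_angle, EuclideanGeometry.angle, dist_comm A B,
    dist_comm A C, dist_eq_norm, dist_eq_norm]
  rfl

theorem dist_mul_dist_mul_dist_eq_four_mul_circumradius_mul_volume (A B C : Euc 2)
    (hind : AffineIndependent ℝ ![A, B, C]) :
    dist A B * dist A C * dist B C
      = 4 * (⟨![A, B, C], hind⟩ : Affine.Triangle ℝ (Euc 2)).circumradius
        * (volume (convexHull ℝ {A, B, C})).toReal := by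
  have hsin : 0 < Real.sin (∠ B A C) := by
    refine sin_pos_of_not_collinear ?_
    rw [insert_comm]
    exact affineIndependent_iff_not_collinear_set.1 hind
  have hsine_law : dist B C / Real.sin (∠ B A C) / 2 = _ :=
    Affine.Triangle.dist_div_sin_angle_div_two_eq_circumradius ⟨![A, B, C], hind⟩
      (i₁ := 1) (i₂ := 0) (i₃ := 2) (by decide) (by decide) (by decide)
  rw [volume_convexHull_triangle, ENNReal.toReal_ofReal (by positivity), ← hsine_law]
  field_simp
  ring

theorem mul_mul_le_max_sq_mul_min_le_two_mul {a b c : ℝ} (ha : 0 < a) (hb : 0 < b) (hc : 0 < c)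
    (hab : c ≤ a + b) (hac : b ≤ a + c) (hbc : a ≤ b + c) :
    a * b * c ≤ max a (max b c) ^ 2 * min a (min b c) ∧
      max a (max b c) ^ 2 * min a (min b c) ≤ 2 * (a * b * c) := by
  simp only [max_def, min_def]
  split_ifs <;> constructor <;> nlinarith [mul_pos ha hb, mul_pos hb hc, mul_pos ha hc]

/-- for every nondegenerate triangle `T₀` in the Euclidean plane, with
`h_{T₀}` the longest edge length, `|T₀|` the area, and
`H_{T₀} = (h_{T₀}²/|T₀|)·min_i |L_i|`, the quantity `H_{T₀}` is equivalent to the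
circumradius `R₂`: explicitly `4·R₂ ≤ H_{T₀} ≤ 8·R₂`. -/
theorem stmt_4 (A B C : Euc 2) (hind : AffineIndependent ℝ ![A, B, C]) :
    ∀ hT₀ HT₀ R₂ : ℝ,
      hT₀ = max (dist A B) (max (dist A C) (dist B C)) →
      HT₀ = hT₀ ^ 2 / (volume (convexHull ℝ {A, B, C})).toReal *
        min (dist A B) (min (dist A C) (dist B C)) →
      R₂ = (⟨![A, B, C], hind⟩ : Affine.Simplex ℝ (Euc 2) 2).circumradius →
      4 * R₂ ≤ HT₀ ∧ HT₀ ≤ 8 * R₂ := by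
  rintro _ _ _ rfl rfl rfl
  have hkey := dist_mul_dist_mul_dist_eq_four_mul_circumradius_mul_volume A B C hind
  set R := (⟨![A, B, C], hind⟩ : Affine.Simplex ℝ (Euc 2) 2).circumradius
  set area := (volume (convexHull ℝ {A, B, C})).toReal
  have hAB : 0 < dist A B := dist_pos.2 (hind.injective.ne (by decide : (0 : Fin 3) ≠ 1))
  have hAC : 0 < dist A C := dist_pos.2 (hind.injective.ne (by decide : (0 : Fin 3) ≠ 2))
  have hBC : 0 < dist B C := dist_pos.2 (hind.injective.ne (by decide : (1 : Fin 3) ≠ 2))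
  have hR : 0 < R := Affine.Simplex.circumradius_pos _
  have harea : 0 < area :=
    pos_of_mul_pos_right (hkey ▸ by positivity : 0 < 4 * R * area) (by positivity)
  obtain ⟨hlower, hupper⟩ := mul_mul_le_max_sq_mul_min_le_two_mul hAB hAC hBC
    (dist_triangle_left B C A) (dist_triangle A B C) (dist_triangle_right A B C)
  rw [div_mul_eq_mul_div, le_div_iff₀ harea, div_le_iff₀ harea]
  constructor <;> linarith
end
end

section
/- For every γ₁ with 0 < γ₁ < π there exists γ₀ > 0 such that every nondegenerate triangle T₀ in the Euclidean plane whose maximum interior angle θ_{T₀,max} satisfies θ_{T₀,max} ≤ γ₁ also satisfies H_{T₀}/h_{T₀} ≤ γ₀. -/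
/-!
At one end of the longest edge the angle lies in `[(π - γ₁)/2, γ₁]`: the two end angles sum to
at least `π - γ₁`, since the third angle is at most `γ₁`. Hence its sine is at least
`s = min (sin ((π - γ₁)/2)) (sin γ₁) > 0`. The area is half the product of the two sides at that
vertex times this sine; one side is the longest edge `h`, the other is at least the shortest edge,
so `h · min |Lᵢ| · s ≤ 2 |T₀|`, i.e. `H_{T₀}/h_{T₀} ≤ 2 / s`.

The area formula comes from mapping the unit triangle by the linear map with columns `B - A`,
`C - A`, whose determinant is `± |AB| |AC| sin ∠BAC` by Lagrange's identity.
-/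

open MeasureTheory ENNReal EuclideanGeometry

noncomputable section

open Set Pointwise Real

namespace MaxAngleCondition

lemma convexHull_zero_single_single :
    convexHull ℝ {(0 : Euc 2), EuclideanSpace.single 0 1, EuclideanSpace.single 1 1}
      = {x | x 0 ∈ Icc 0 1 ∧ x 1 ∈ Icc 0 (1 - x 0)} := by
  apply Subset.antisymm
  · refine convexHull_min ?_ ?_
    · rintro x (rfl | rfl | rfl) <;> simp
    · rintro x ⟨⟨hx0, -⟩, hx1, hxs⟩ y ⟨⟨hy0, -⟩, hy1, hys⟩ a b ha hb hab
      simp only [mem_ofPred_eq, mem_Icc, PiLp.add_apply, PiLp.smul_apply, smul_eq_mul]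
      refine ⟨⟨by positivity, ?_⟩, by positivity, ?_⟩ <;> nlinarith
  · rintro x ⟨⟨hx0, -⟩, hx1, hxs⟩
    have hweights : ∑ i, ![1 - x 0 - x 1, x 0, x 1] i = 1 := by
      simp [Fin.sum_univ_three]; ring
    convert (convex_convexHull ℝ _).sum_mem (t := Finset.univ) (fun i _ => ?_) hweights
      (z := ![(0 : Euc 2), EuclideanSpace.single 0 1, EuclideanSpace.single 1 1])
      (fun i _ => ?_) using 1
    · ext j; fin_cases j <;> simp [Fin.sum_univ_three]
    · fin_cases i <;> simp <;> linarith
    · apply subset_convexHull; fin_cases i <;> simp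

lemma volume_unitTriangle_prod :
    volume {p : ℝ × ℝ | p.1 ∈ Icc 0 1 ∧ p.2 ∈ Icc 0 (1 - p.1)} = ENNReal.ofReal (1 / 2) := by
  rw [show (volume : Measure (ℝ × ℝ)) = volume.prod volume from rfl,
    Measure.prod_apply (measurableSet_region_between_cc (f := fun _ => 0) (g := fun x => 1 - x)
      measurable_const (measurable_const.sub measurable_id) measurableSet_Icc)]
  have hslice : (fun x : ℝ =>
      volume (Prod.mk x ⁻¹' {p : ℝ × ℝ | p.1 ∈ Icc 0 1 ∧ p.2 ∈ Icc 0 (1 - p.1)}))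
      = (Icc 0 1).indicator fun x => ENNReal.ofReal (1 - x) := by
    funext x
    by_cases hx : x ∈ Icc (0 : ℝ) 1
    · simp only [preimage, mem_ofPred_eq, hx, true_and, indicator_of_mem hx]
      rw [ofPred_mem_eq, Real.volume_Icc, sub_zero]
    · simp only [preimage, mem_ofPred_eq, hx, false_and, ofPred_false, measure_empty,
        indicator_of_notMem hx]
  rw [hslice, lintegral_indicator measurableSet_Icc, ← ofReal_integral_eq_lintegral_ofReal]
  · rw [integral_Icc_eq_integral_Ioc, ← intervalIntegral.integral_of_le zero_le_one,
      intervalIntegral.integral_comp_sub_left (fun x => x)]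
    norm_num
  · exact (continuous_const.sub continuous_id).integrableOn_Icc
  · filter_upwards [ae_restrict_mem measurableSet_Icc] with x hx
    simpa using hx.2

lemma volume_convexHull_zero_single_single :
    volume (convexHull ℝ {(0 : Euc 2), EuclideanSpace.single 0 1, EuclideanSpace.single 1 1})
      = ENNReal.ofReal (1 / 2) := by
  rw [convexHull_zero_single_single, ← volume_unitTriangle_prod]
  exact ((EuclideanSpace.volume_preserving_symm_measurableEquiv_toLp (Fin 2)).trans
    (volume_preserving_finTwoArrow ℝ)).measure_preimage_equiv
    {p : ℝ × ℝ | p.1 ∈ Icc 0 1 ∧ p.2 ∈ Icc 0 (1 - p.1)}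

lemma det_constr_basisFun (u v : Euc 2) :
    LinearMap.det ((PiLp.basisFun 2 ℝ (Fin 2)).constr ℝ ![u, v]) = u 0 * v 1 - v 0 * u 1 := by
  rw [← LinearMap.det_toMatrix (PiLp.basisFun 2 ℝ (Fin 2)), Matrix.det_fin_two]
  simp [LinearMap.toMatrix_apply]

lemma sin_angle_mul_norm_mul_norm_eq_abs (u v : Euc 2) :
    sin (InnerProductGeometry.angle u v) * (‖u‖ * ‖v‖) = |u 0 * v 1 - v 0 * u 1| := by
  rw [InnerProductGeometry.sin_angle_mul_norm_mul_norm, ← Real.sqrt_sq_eq_abs]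
  congr 1
  simp only [PiLp.inner_apply, RCLike.inner_apply, conj_trivial, Fin.sum_univ_two]
  ring

theorem volume_convexHull_triangle (A B C : Euc 2) :
    (volume (convexHull ℝ {A, B, C})).toReal = dist A B * dist A C * sin (∠ B A C) / 2 := by
  set f := (PiLp.basisFun 2 ℝ (Fin 2)).constr ℝ ![B - A, C - A]
  have hvertices : ({A, B, C} : Set (Euc 2))
      = A +ᵥ f '' {0, EuclideanSpace.single 0 1, EuclideanSpace.single 1 1} := by
    simp only [f, image_insert_eq, image_singleton, map_zero, ← PiLp.basisFun_apply,
      Module.Basis.constr_basis]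
    simp [vadd_set_insert]
  rw [hvertices, convexHull_vadd, ← LinearMap.image_convexHull, measure_vadd,
    Measure.addHaar_image_linearMap, volume_convexHull_zero_single_single, det_constr_basisFun,
    ← ofReal_mul (abs_nonneg _), toReal_ofReal (by positivity),
    ← sin_angle_mul_norm_mul_norm_eq_abs, dist_eq_norm', dist_eq_norm']
  simp only [EuclideanGeometry.angle, vsub_eq_sub]
  ring

/-- The minimum of `sin` on `[(π - γ) / 2, γ]`, attained at an endpoint since `sin` is concave
on `[0, π]`. -/
def sinBound (γ : ℝ) : ℝ := min (sin ((π - γ) / 2)) (sin γ)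

lemma sinBound_pos {γ : ℝ} (hγ₀ : 0 < γ) (hγ : γ < π) : 0 < sinBound γ :=
  lt_min (sin_pos_of_pos_of_lt_pi (by linarith) (by linarith [pi_pos]))
    (sin_pos_of_pos_of_lt_pi hγ₀ hγ)

lemma sinBound_le_sin {γ θ : ℝ} (hγ : γ ≤ π) (h₁ : (π - γ) / 2 ≤ θ) (h₂ : θ ≤ γ) :
    sinBound γ ≤ sin θ := by
  rcases le_total θ (π / 2) with hθ | hθ
  · exact (min_le_left _ _).trans <| strictMonoOn_sin.monotoneOn
      ⟨by linarith, by linarith⟩ ⟨by linarith, hθ⟩ h₁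
  · refine (min_le_right _ _).trans ?_
    rw [← sin_pi_sub θ, ← sin_pi_sub γ]
    exact strictMonoOn_sin.monotoneOn ⟨by linarith, by linarith⟩ ⟨by linarith, by linarith⟩
      (by linarith)

lemma dist_mul_mul_sinBound_le_of_angle {γ m : ℝ} {A B C : Euc 2} (hγ : γ ≤ π)
    (h₁ : (π - γ) / 2 ≤ ∠ B A C) (h₂ : ∠ B A C ≤ γ) (hm : 0 ≤ m) (hmC : m ≤ dist A C) :
    dist A B * m * sinBound γ ≤ 2 * (volume (convexHull ℝ {A, B, C})).toReal := by
  have hsin : m * sinBound γ ≤ dist A C * sin (∠ B A C) :=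
    mul_le_mul_of_nonneg hmC (sinBound_le_sin hγ h₁ h₂) hm
      (InnerProductGeometry.sin_angle_nonneg _ _)
  rw [volume_convexHull_triangle]
  nlinarith [dist_nonneg (x := A) (y := B)]

lemma dist_mul_mul_sinBound_le {γ m : ℝ} {A B C : Euc 2} (hγ : γ ≤ π)
    (hA : ∠ B A C ≤ γ) (hB : ∠ A B C ≤ γ) (hC : ∠ A C B ≤ γ)
    (hm : 0 ≤ m) (hmA : m ≤ dist A C) (hmB : m ≤ dist B C) :
    dist A B * m * sinBound γ ≤ 2 * (volume (convexHull ℝ {A, B, C})).toReal := by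
  rcases eq_or_ne A B with rfl | hAB
  · simp only [dist_self, zero_mul]
    positivity
  have hsum := angle_add_angle_add_angle_eq_pi C hAB.symm
  rw [angle_comm B C A, angle_comm C A B] at hsum
  rcases le_total ((π - γ) / 2) (∠ B A C) with hA' | hA'
  · exact dist_mul_mul_sinBound_le_of_angle hγ hA' hA hm hmA
  · have := dist_mul_mul_sinBound_le_of_angle (A := B) (B := A) hγ (by linarith) hB hm hmB
    rwa [dist_comm, insert_comm] at this

lemma max_dist_mul_min_dist_mul_sinBound_le {γ : ℝ} {A B C : Euc 2} (hγ : γ ≤ π)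
    (hA : ∠ B A C ≤ γ) (hB : ∠ A B C ≤ γ) (hC : ∠ A C B ≤ γ) :
    max (dist A B) (max (dist A C) (dist B C)) * min (dist A B) (min (dist A C) (dist B C))
      * sinBound γ ≤ 2 * (volume (convexHull ℝ {A, B, C})).toReal := by
  set m := min (dist A B) (min (dist A C) (dist B C))
  have hm : 0 ≤ m := by positivity
  have hAB := dist_mul_mul_sinBound_le hγ hA hB hC hm (by simp [m]) (by simp [m])
  have hAC := dist_mul_mul_sinBound_le (B := C) (C := B) hγ (by rwa [angle_comm]) hC hB hm
    (by simp [m]) (by simp [m, dist_comm])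
  have hBC := dist_mul_mul_sinBound_le (A := B) (B := C) (C := A) hγ (by rwa [angle_comm])
    (by rwa [angle_comm]) hA hm (by simp [m, dist_comm]) (by simp [m, dist_comm])
  rw [pair_comm C B] at hAC
  rw [pair_comm C A, insert_comm B A] at hBC
  rcases le_total 0 (sinBound γ) with hs | hs
  · simp only [max_mul_of_nonneg _ _ hm, max_mul_of_nonneg _ _ hs, max_le_iff]
    exact ⟨hAB, hAC, hBC⟩
  · exact (mul_nonpos_of_nonneg_of_nonpos (by positivity) hs).trans (by positivity)

lemma sq_div_mul_div_le_of_mul_le {h m T s : ℝ} (hs : 0 < s) (hT : 0 ≤ T)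
    (hhm : h * m * s ≤ 2 * T) : h ^ 2 / T * m / h ≤ 2 / s := by
  calc h ^ 2 / T * m / h = h * m / T := by
        rcases eq_or_ne h 0 with h0 | h0
        · simp [h0]
        · field_simp
    _ ≤ 2 / s := by
        rcases hT.eq_or_lt with hT₀ | hT₀
        · rw [← hT₀, _root_.div_zero]
          positivity
        · rw [div_le_div_iff₀ hT₀ hs]
          linarith

end MaxAngleCondition

open MaxAngleCondition in
/-- for every `γ₁` with `0 < γ₁ < π` there exists `γ₀ > 0` such that every
nondegenerate triangle `T₀` (vertices `A`, `B`, `C`) whose maximum interior angle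
satisfies `θ_{T₀,max} ≤ γ₁` also satisfies `H_{T₀}/h_{T₀} ≤ γ₀`, where `h_{T₀}` is the
longest edge length and `H_{T₀} = (h_{T₀}²/|T₀|)·min_i |L_i|`. -/
theorem stmt_5 (γ₁ : ℝ) (hγ₁ : 0 < γ₁) (hγ₁' : γ₁ < Real.pi) :
    ∃ γ₀ : ℝ, 0 < γ₀ ∧
      ∀ A B C : Euc 2, AffineIndependent ℝ ![A, B, C] →
        max (∠ B A C) (max (∠ A B C) (∠ A C B)) ≤ γ₁ →
        ∀ hT₀ HT₀ : ℝ,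
          hT₀ = max (dist A B) (max (dist A C) (dist B C)) →
          HT₀ = hT₀ ^ 2 / (volume (convexHull ℝ {A, B, C})).toReal *
            min (dist A B) (min (dist A C) (dist B C)) →
          HT₀ / hT₀ ≤ γ₀ := by
  have hs := sinBound_pos hγ₁ hγ₁'
  refine ⟨2 / sinBound γ₁, by positivity, ?_⟩
  rintro A B C - hangle _ _ rfl rfl
  simp only [max_le_iff] at hangle
  obtain ⟨hA, hB, hC⟩ := hangle
  exact sq_div_mul_div_le_of_mul_le hs toReal_nonneg
    (max_dist_mul_min_dist_mul_sinBound_le hγ₁'.le hA hB hC)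
end
end

section
/- For every γ₀ > 0 there exists γ₁ with 0 < γ₁ < π such that every nondegenerate triangle T₀ in the Euclidean plane with H_{T₀}/h_{T₀} ≤ γ₀ has maximum interior angle θ_{T₀,max} ≤ γ₁. -/
open MeasureTheory ENNReal EuclideanGeometry

noncomputable section

/-!
The triangle lies in the parallelogram spanned by two of its edges at a vertex `A`, so its area
is at most `|AB| |AC| sin ∠A`. At an angle `θ ≥ π/2` the opposite edge is the longest, whence
`|AB| |AC| ≤ h_{T₀} · min_i |L_i|`. Together with `h_{T₀} · min_i |L_i| = (H_{T₀}/h_{T₀}) |T₀|`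
this gives `sin θ ≥ 1/γ₀`, so `θ ≤ π - arcsin (1/γ₀)`; acute angles satisfy this bound anyway.
-/

open Pointwise Real

theorem convexHull_triangle_subset_vadd_parallelepiped {E : Type*} [AddCommGroup E]
    [Module ℝ E] (a b c : E) : convexHull ℝ {a, b, c} ⊆ a +ᵥ parallelepiped ![b - a, c - a] := by
  refine convexHull_min ?_ ((convex_parallelepiped _).vadd a)
  simp only [Set.insert_subset_iff, Set.singleton_subset_iff, Set.mem_vadd_set,
    mem_parallelepiped_iff]
  refine ⟨⟨0, ⟨0, ⟨le_rfl, zero_le_one⟩, by simp⟩, by simp⟩,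
    ⟨b - a, ⟨![1, 0], ?_, by simp [Fin.sum_univ_two]⟩, by simp⟩,
    ⟨c - a, ⟨![0, 1], ?_, by simp [Fin.sum_univ_two]⟩, by simp⟩⟩ <;>
  constructor <;> intro i <;> fin_cases i <;> norm_num

theorem EuclideanSpace.volume_parallelepiped_pair (u v : Euc 2) :
    volume (parallelepiped ![u, v]) =
      ENNReal.ofReal (‖u‖ * ‖v‖ * sin (InnerProductGeometry.angle u v)) := by
  rw [← (EuclideanSpace.basisFun (Fin 2) ℝ).addHaar_eq_volume, Measure.addHaar_parallelepiped,
    Module.Basis.det_apply, Matrix.det_fin_two, mul_comm _ (sin _),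
    InnerProductGeometry.sin_angle_mul_norm_mul_norm, ← sqrt_sq_eq_abs]
  congr 2
  simp only [Module.Basis.toMatrix_apply, OrthonormalBasis.coe_toBasis_repr_apply,
    EuclideanSpace.basisFun_repr, Matrix.cons_val_zero, Matrix.cons_val_one, PiLp.inner_apply,
    RCLike.inner_apply, conj_trivial, Fin.sum_univ_two]
  ring

theorem volume_convexHull_triangle_le (A B C : Euc 2) :
    (volume (convexHull ℝ {A, B, C})).toReal ≤ dist A B * dist A C * sin (∠ B A C) := by
  have hsub := measure_mono (μ := volume) (convexHull_triangle_subset_vadd_parallelepiped A B C)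
  rw [measure_vadd, EuclideanSpace.volume_parallelepiped_pair] at hsub
  rw [dist_comm A B, dist_comm A C, dist_eq_norm, dist_eq_norm]
  refine ENNReal.toReal_le_of_le_ofReal ?_ hsub
  exact mul_nonneg (by positivity) (sin_nonneg_of_nonneg_of_le_pi
    (InnerProductGeometry.angle_nonneg _ _) (InnerProductGeometry.angle_le_pi _ _))

theorem volume_convexHull_triangle_pos {A B C : Euc 2} (h : AffineIndependent ℝ ![A, B, C]) :
    0 < (volume (convexHull ℝ {A, B, C})).toReal := by
  have hrange : Set.range ![A, B, C] = {A, B, C} := by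
    simp only [Matrix.range_cons, Matrix.range_empty, Set.union_empty, Set.singleton_union]
  have hspan : affineSpan ℝ {A, B, C} = ⊤ := by
    rw [← hrange, h.affineSpan_eq_top_iff_card_eq_finrank_add_one]
    simp
  refine ENNReal.toReal_pos (Measure.measure_pos_of_nonempty_interior _ ?_).ne' ?_
  · exact interior_convexHull_nonempty_iff_affineSpan_eq_top.mpr hspan
  · exact ((Set.toFinite _).isCompact_convexHull (𝕜 := ℝ) |>.measure_lt_top).ne

section EuclideanAffine

variable {V P : Type*} [NormedAddCommGroup V] [InnerProductSpace ℝ V] [MetricSpace P]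
  [NormedAddTorsor V P]

theorem dist_le_dist_of_pi_div_two_le_angle {a b c : P} (h : π / 2 ≤ ∠ b a c) :
    dist a b ≤ dist b c := by
  have hcos : cos (∠ b a c) ≤ 0 :=
    cos_nonpos_of_pi_div_two_le_of_le h (by linarith [angle_le_pi b a c, pi_pos])
  have hlaw := law_cos b a c
  rw [dist_comm b a, dist_comm c a] at hlaw
  refine (sq_le_sq₀ dist_nonneg dist_nonneg).1 ?_
  nlinarith [mul_nonneg (mul_nonneg (dist_nonneg (x := a) (y := b)) (dist_nonneg (x := a) (y := c)))
    (neg_nonneg.2 hcos), sq_nonneg (dist a c)]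

theorem le_pi_sub_arcsin_of_le_sin {θ s : ℝ} (hπ : θ ≤ π) (hs : s ≤ sin θ) :
    θ ≤ π - arcsin s := by
  rcases le_or_gt θ (π / 2) with hθ | hθ
  · linarith [arcsin_le_pi_div_two s]
  · have : arcsin (sin (π - θ)) = π - θ := arcsin_sin (by linarith) (by linarith)
    rw [sin_pi_sub] at this
    linarith [arcsin_le_arcsin hs]

theorem angle_le_pi_sub_arcsin_inv {A B C : P} {γ S h m : ℝ} (hS : 0 < S)
    (hSle : S ≤ dist A B * dist A C * sin (∠ B A C)) (hAB : dist A B ≤ h) (hAC : dist A C ≤ h)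
    (hm : min (dist A B) (min (dist A C) (dist B C)) ≤ m) (hkey : h * m ≤ γ * S) :
    ∠ B A C ≤ π - arcsin γ⁻¹ := by
  rcases le_or_gt (∠ B A C) (π / 2) with hacute | hobtuse
  · linarith [arcsin_le_pi_div_two γ⁻¹]
  have hCB : dist A C ≤ dist B C := by
    rw [dist_comm B C]
    exact dist_le_dist_of_pi_div_two_le_angle (angle_comm B A C ▸ hobtuse.le)
  rw [min_eq_left hCB] at hm
  have hprod : dist A B * dist A C ≤ h * m := by
    rw [← max_mul_min]
    exact mul_le_mul (max_le hAB hAC) hm (le_min dist_nonneg dist_nonneg)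
      (dist_nonneg.trans hAB)
  have hsin0 : 0 ≤ sin (∠ B A C) := sin_nonneg_of_nonneg_of_le_pi (angle_nonneg B A C)
    (angle_le_pi B A C)
  have hsin : 1 ≤ γ * sin (∠ B A C) := by
    refine le_of_mul_le_mul_right ?_ hS
    calc 1 * S ≤ dist A B * dist A C * sin (∠ B A C) := by rwa [one_mul]
      _ ≤ γ * S * sin (∠ B A C) := mul_le_mul_of_nonneg_right (hprod.trans hkey) hsin0
      _ = γ * sin (∠ B A C) * S := by ring
  have hγ : 0 < γ := by
    by_contra! hγ
    nlinarith
  refine le_pi_sub_arcsin_of_le_sin (angle_le_pi B A C) ?_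
  rwa [inv_le_iff_one_le_mul₀' hγ]

end EuclideanAffine

/-- for every `γ₀ > 0` there exists `γ₁` with `0 < γ₁ < π` such that every
nondegenerate triangle `T₀` (vertices `A`, `B`, `C`) with `H_{T₀}/h_{T₀} ≤ γ₀` has
maximum interior angle `θ_{T₀,max} ≤ γ₁`, where `h_{T₀}` is the longest edge length and
`H_{T₀} = (h_{T₀}²/|T₀|)·min_i |L_i|`. -/
theorem stmt_6 (γ₀ : ℝ) (hγ₀ : 0 < γ₀) :
    ∃ γ₁ : ℝ, 0 < γ₁ ∧ γ₁ < Real.pi ∧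
      ∀ A B C : Euc 2, AffineIndependent ℝ ![A, B, C] →
        ∀ hT₀ HT₀ : ℝ,
          hT₀ = max (dist A B) (max (dist A C) (dist B C)) →
          HT₀ = hT₀ ^ 2 / (volume (convexHull ℝ {A, B, C})).toReal *
            min (dist A B) (min (dist A C) (dist B C)) →
          HT₀ / hT₀ ≤ γ₀ →
          max (∠ B A C) (max (∠ A B C) (∠ A C B)) ≤ γ₁ := by
  refine ⟨π - arcsin γ₀⁻¹, by linarith [arcsin_le_pi_div_two γ₀⁻¹, pi_pos],
    by linarith [arcsin_pos.2 (inv_pos.2 hγ₀)], ?_⟩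
  intro A B C hABC h H hh hH hle
  set S := (volume (convexHull ℝ {A, B, C})).toReal
  set m := min (dist A B) (min (dist A C) (dist B C))
  have hS : 0 < S := volume_convexHull_triangle_pos hABC
  have hHS : H / h * S = h * m := by
    rcases eq_or_ne h 0 with h0 | h0
    · simp [h0]
    · rw [hH]; field_simp
  have hkey : h * m ≤ γ₀ * S := hHS ▸ mul_le_mul_of_nonneg_right hle hS.le
  have hAB : dist A B ≤ h := hh ▸ le_max_left _ _
  have hAC : dist A C ≤ h := hh ▸ (le_max_left _ _).trans (le_max_right _ _)
  have hBC : dist B C ≤ h := hh ▸ (le_max_right _ _).trans (le_max_right _ _)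
  refine max_le ?_ (max_le ?_ ?_)
  · exact angle_le_pi_sub_arcsin_inv hS (volume_convexHull_triangle_le A B C) hAB hAC le_rfl hkey
  · refine angle_le_pi_sub_arcsin_inv hS ?_ (dist_comm A B ▸ hAB) hBC ?_ hkey
    · simpa only [S, Set.insert_comm A B] using volume_convexHull_triangle_le B A C
    · simp only [m, dist_comm, min_comm, le_refl]
  · refine angle_le_pi_sub_arcsin_inv hS ?_ (dist_comm A C ▸ hAC) (dist_comm B C ▸ hBC) ?_ hkey
    · simpa only [S, Set.insert_comm C A, Set.pair_comm C B] using
        volume_convexHull_triangle_le C A B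
    · simp only [m, dist_comm, min_comm, min_left_comm, le_refl]
end
end
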